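/- arXiv:0911.1417 — 2 statements merged into one kernel-verified Lean document; each statement's English description precedes it below -/
import Mathlib

section
/- Let H = Σ_{i=1}^{[(n-1)/2]} H_{2i+1} and let [x_p]_{2t+3} ∈ E_{2t+3}^{p,q} with t ≥ 1, and let x_{p+2i}^{(t)} (1 ≤ i ≤ t) be forms as produced by the cup-product description of d_{2t+3} (i.e. making the components y_{p+2j+1} of Dx vanish for 0 ≤ j ≤ t). Then the collection A = (a_{i,j}) defined by a_{t+2,t+2} = x_p, a_{i,i+k} = (−1)^k H_{2k+3} for 1 ≤ i ≤ t+1−k and 0 ≤ k < t, and a_{i,t+2} = (−1)^{t+2−i} x_{p+2(t+2−i)}^{(t)} for 2 ≤ i ≤ t+1, is a defining system for the (t+2)-fold Massey product ⟨H_3,...,H_3,x_p⟩ (with t+1 copies of H_3). -/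
section MasseySetup

variable {W : Type} [Ring W] [Algebra ℝ W]

/-- The degree `r_i + r_{i+1} + ⋯ + r_j - j + i` of the entry `a_{i,j}` of a defining system. -/
def masseyDeg (rdeg : ℕ → ℤ) (i j : ℕ) : ℤ := (∑ k ∈ Finset.Icc i j, rdeg k) - j + i

/-- The sign occurring in `ā_{i,j} = (-1)^{1 + deg a_{i,j}} a_{i,j}`. -/
noncomputable def barSign (rdeg : ℕ → ℤ) (i j : ℕ) : ℝ := (-1 : ℝ) ^ (1 + masseyDeg rdeg i j)

/-- `a = (a_{i,j})`, `1 ≤ i ≤ j ≤ m`, `(i,j) ≠ (1,m)`, is a defining system for the `m`-fold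
Massey product `⟨z_1, …, z_m⟩` (with `z_i` of degree `rdeg i`):  `a_{i,j}` has degree
`r_i + ⋯ + r_j - j + i`, `a_{i,i} = z_i`, and `d a_{i,j} = ∑_{r=i}^{j-1} ā_{i,r} ∧ a_{r+1,j}`. -/
def IsDefiningSystem (A : ℤ → Submodule ℝ W) (d : W →ₗ[ℝ] W) (m : ℕ) (rdeg : ℕ → ℤ)
    (z : ℕ → W) (a : ℕ → ℕ → W) : Prop :=
  (∀ i j : ℕ, 1 ≤ i → i ≤ j → j ≤ m → (i, j) ≠ (1, m) → a i j ∈ A (masseyDeg rdeg i j)) ∧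
  (∀ i : ℕ, 1 ≤ i → i ≤ m → a i i = z i) ∧
  (∀ i j : ℕ, 1 ≤ i → i ≤ j → j ≤ m → (i, j) ≠ (1, m) →
    d (a i j) = ∑ r ∈ Finset.Icc i (j - 1), (barSign rdeg i r • a i r) * a (r + 1) j)

/-- The related cocycle `c(a) = ∑_{r=1}^{m-1} ā_{1,r} ∧ a_{r+1,m}` of a defining system. -/
noncomputable def relatedCocycle (rdeg : ℕ → ℤ) (m : ℕ) (a : ℕ → ℕ → W) : W :=
  ∑ r ∈ Finset.Icc 1 (m - 1), (barSign rdeg 1 r • a 1 r) * a (r + 1) m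

end MasseySetup


private lemma key_cancel {W : Type} [Ring W] [Algebra ℝ W] (A : ℤ → Submodule ℝ W)
    (hgcomm : ∀ (i j : ℤ) (x y : W), x ∈ A i → y ∈ A j →
      x * y = ((-1 : ℝ) ^ (i * j)) • (y * x))
    (Hc : ℕ → W) (hHmem : ∀ i : ℕ, Hc i ∈ A (2 * (i : ℤ) + 1)) (s : ℕ) :
    ∑ k ∈ Finset.Icc 1 s, Hc k * Hc (s + 1 - k) = 0 := by
  have hodd : ∀ k l : ℤ, Odd ((2 * k + 1) * (2 * l + 1)) :=
    fun k l => ⟨2 * k * l + k + l, by ring⟩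
  have hneg : ∀ k ∈ Finset.Icc 1 s,
      Hc k * Hc (s + 1 - k) = -(Hc (s + 1 - k) * Hc k) := by
    intro k _
    rw [hgcomm _ _ _ _ (hHmem k) (hHmem (s + 1 - k)),
      Odd.neg_one_zpow (hodd _ _), neg_one_smul]
  have hrev : ∑ k ∈ Finset.Icc 1 s, Hc (s + 1 - k) * Hc k
      = ∑ k ∈ Finset.Icc 1 s, Hc k * Hc (s + 1 - k) := by
    apply Finset.sum_nbij' (i := fun k => s + 1 - k) (j := fun k => s + 1 - k) <;>
      simp only [Finset.mem_Icc] <;> intro k hk <;>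
        first
          | omega
          | rw [show s + 1 - (s + 1 - k) = k from by omega]
  have h2 : (2 : ℝ) • (∑ k ∈ Finset.Icc 1 s, Hc k * Hc (s + 1 - k)) = 0 := by
    rw [two_smul]
    nth_rewrite 1 [Finset.sum_congr rfl hneg]
    rw [Finset.sum_neg_distrib, hrev, neg_add_cancel]
  calc ∑ k ∈ Finset.Icc 1 s, Hc k * Hc (s + 1 - k)
      = (2 : ℝ)⁻¹ • ((2 : ℝ) • ∑ k ∈ Finset.Icc 1 s, Hc k * Hc (s + 1 - k)) := by
        rw [smul_smul]; norm_num
    _ = 0 := by rw [h2, smul_zero]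

/-- Lemma 5.6(1) of the paper. Let
`H = ∑_{i=1}^{[(n-1)/2]} H_{2i+1}` and let `x` be a closed `p`-form representing a class
`[x_p]_{2t+3} ∈ E_{2t+3}^{p,q}` (`t ≥ 1`), and let `xs i = x_{p+2i}^{(t)}` (`1 ≤ i ≤ t`) be
forms as produced by the cup-product description of `d_{2t+3}`, i.e. making the homogeneous
components `y_{p+2j+1}` of `Dx` vanish for `0 ≤ j ≤ t` (the equations `heq`). Then the
collection `a` defined by `a_{t+2,t+2} = x`, `a_{i,i+k} = (-1)^k H_{2k+3}`
(`1 ≤ i`, `i + k ≤ t+1`), and `a_{i,t+2} = (-1)^{t+2-i} x_{p+2(t+2-i)}^{(t)}`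
(`2 ≤ i ≤ t+1`) is a defining system for the `(t+2)`-fold Massey product
`⟨H_3, …, H_3, x_p⟩` (with `t+1` copies of `H_3`). -/
theorem defining_system_from_cup_product_description {W : Type} [Ring W] [Algebra ℝ W]
    (n : ℕ) (A : ℤ → Submodule ℝ W) [DirectSum.Decomposition A]
    (hbound : ∀ i : ℤ, i < 0 ∨ (n : ℤ) < i → A i = ⊥)
    (hmul : ∀ (i j : ℤ) (x y : W), x ∈ A i → y ∈ A j → x * y ∈ A (i + j))
    (d : W →ₗ[ℝ] W)
    (hdmem : ∀ i : ℤ, ∀ x ∈ A i, d x ∈ A (i + 1))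
    (hd2 : ∀ x : W, d (d x) = 0)
    (hleib : ∀ (i : ℤ) (x y : W), x ∈ A i →
      d (x * y) = d x * y + ((-1 : ℝ) ^ i) • (x * d y))
    (hgcomm : ∀ (i j : ℤ) (x y : W), x ∈ A i → y ∈ A j →
      x * y = ((-1 : ℝ) ^ (i * j)) • (y * x))
    (Hc : ℕ → W)
    (hHmem : ∀ i : ℕ, Hc i ∈ A (2 * (i : ℤ) + 1))
    (hHcl : ∀ i : ℕ, d (Hc i) = 0)
    (H : W) (hHdef : H = ∑ i ∈ Finset.Icc 1 ((n - 1) / 2), Hc i)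
    (D : W →ₗ[ℝ] W) (hD : ∀ w : W, D w = d w + H * w)
    (t : ℕ) (ht : 1 ≤ t) (p : ℤ)
    (x : W) (hxp : x ∈ A p) (hxd : d x = 0)
    (xs : ℕ → W) (hxs0 : xs 0 = x)
    (hxsm : ∀ i : ℕ, 1 ≤ i → i ≤ t → xs i ∈ A (p + 2 * i))
    (heq : ∀ j : ℕ, 1 ≤ j → j ≤ t →
      d (xs j) + ∑ i ∈ Finset.Icc 1 j, Hc i * xs (j - i) = 0)
    (a : ℕ → ℕ → W)
    (ha1 : ∀ i k : ℕ, 1 ≤ i → i + k ≤ t + 1 → a i (i + k) = ((-1 : ℝ) ^ k) • Hc (k + 1))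
    (ha2 : ∀ i : ℕ, 2 ≤ i → i ≤ t + 1 →
      a i (t + 2) = ((-1 : ℝ) ^ (t + 2 - i)) • xs (t + 2 - i))
    (ha3 : a (t + 2) (t + 2) = x) :
    IsDefiningSystem A d (t + 2) (fun i => if i ≤ t + 1 then (3 : ℤ) else p)
      (fun i => if i ≤ t + 1 then Hc 1 else x) a := by
  set rdeg : ℕ → ℤ := fun i => if i ≤ t + 1 then (3 : ℤ) else p with hrdeg
  have md1 : ∀ i j : ℕ, i ≤ j → j ≤ t + 1 → masseyDeg rdeg i j = 2 * ((j : ℤ) - i) + 3 := by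
    intro i j hij hj
    unfold masseyDeg
    have hconst : ∑ k ∈ Finset.Icc i j, rdeg k = ∑ k ∈ Finset.Icc i j, (3 : ℤ) :=
      Finset.sum_congr rfl (fun k hk => by
        simp only [Finset.mem_Icc] at hk
        simp only [hrdeg, if_pos (by omega : k ≤ t + 1)])
    rw [hconst, Finset.sum_const, Nat.card_Icc, nsmul_eq_mul]
    omega
  have md2 : ∀ i : ℕ, 2 ≤ i → i ≤ t + 2 →
      masseyDeg rdeg i (t + 2) = p + 2 * ((t : ℤ) + 2 - i) := by
    intro i h2 hi
    unfold masseyDeg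
    rw [show t + 2 = (t + 1) + 1 from rfl,
      Finset.sum_Icc_succ_top (by omega : i ≤ t + 1 + 1)]
    have hconst : ∑ k ∈ Finset.Icc i (t + 1), rdeg k = ∑ k ∈ Finset.Icc i (t + 1), (3 : ℤ) :=
      Finset.sum_congr rfl (fun k hk => by
        simp only [Finset.mem_Icc] at hk
        simp only [hrdeg, if_pos (by omega : k ≤ t + 1)])
    rw [hconst, Finset.sum_const, Nat.card_Icc, nsmul_eq_mul]
    simp only [hrdeg, if_neg (by omega : ¬ (t + 1 + 1 ≤ t + 1))]
    omega
  have bs1 : ∀ i r : ℕ, i ≤ r → r ≤ t + 1 → barSign rdeg i r = 1 := by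
    intro i r hir hr
    unfold barSign
    rw [md1 i r hir hr,
      show 1 + (2 * ((r : ℤ) - i) + 3) = 2 * ((r : ℤ) - i + 2) from by ring,
      zpow_mul]
    norm_num
  have haval1 : ∀ i j : ℕ, 1 ≤ i → i ≤ j → j ≤ t + 1 →
      a i j = ((-1 : ℝ) ^ (j - i)) • Hc (j - i + 1) := by
    intro i j h1 hij hj
    have h := ha1 i (j - i) h1 (by omega)
    rwa [Nat.add_sub_cancel' hij] at h
  have haval2 : ∀ r : ℕ, 1 ≤ r → r ≤ t + 1 →
      a (r + 1) (t + 2) = ((-1 : ℝ) ^ (t + 1 - r)) • xs (t + 1 - r) := by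
    intro r h1 hr
    rcases eq_or_lt_of_le hr with heqr | hlt
    · subst heqr
      simp only [Nat.sub_self, pow_zero, one_smul, hxs0]
      exact ha3
    · have h := ha2 (r + 1) (by omega) (by omega)
      rw [h, show t + 2 - (r + 1) = t + 1 - r from by omega]
  have hdxs : ∀ m : ℕ, 1 ≤ m → m ≤ t →
      d (xs m) = -∑ l ∈ Finset.Icc 1 m, Hc l * xs (m - l) :=
    fun m h1 hm => eq_neg_of_add_eq_zero_left (heq m h1 hm)
  refine ⟨?_, ?_, ?_⟩
  · -- membership
    intro i j hi hij hjm hne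
    rcases le_or_gt j (t + 1) with hj | hj
    · rw [haval1 i j hi hij hj, md1 i j hij hj,
        show 2 * ((j : ℤ) - i) + 3 = 2 * ((j - i + 1 : ℕ) : ℤ) + 1 from by omega]
      exact Submodule.smul_mem _ _ (hHmem _)
    · have hj2 : j = t + 2 := by omega
      subst hj2
      rcases eq_or_lt_of_le hij with hi2 | hi2
      · subst hi2
        rw [ha3, md2 (t + 2) (by omega) le_rfl,
          show p + 2 * ((t : ℤ) + 2 - ((t + 2 : ℕ) : ℤ)) = p from by push_cast; ring]
        exact hxp
      · have h2i : 2 ≤ i := by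
          have hne1 : i ≠ 1 := fun h => hne (by rw [h])
          omega
        rw [ha2 i h2i (by omega), md2 i h2i (by omega),
          show p + 2 * ((t : ℤ) + 2 - i) = p + 2 * ((t + 2 - i : ℕ) : ℤ) from by omega]
        exact Submodule.smul_mem _ _ (hxsm (t + 2 - i) (by omega) (by omega))
  · -- diagonal
    intro i h1 him
    rcases le_or_gt i (t + 1) with hi | hi
    · have h := ha1 i 0 h1 (by omega)
      simp only [pow_zero, one_smul, Nat.add_zero] at h
      simp only [if_pos hi]
      exact h
    · have hi2 : i = t + 2 := by omega
      subst hi2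
      simp only [if_neg (by omega : ¬ t + 2 ≤ t + 1)]
      exact ha3
  · -- differential equations
    intro i j hi hij hjm hne
    rcases le_or_gt j (t + 1) with hj | hj
    · have hterm : ∀ r ∈ Finset.Icc i (j - 1),
          (barSign rdeg i r • a i r) * a (r + 1) j
            = ((-1 : ℝ) ^ (j - i - 1)) • (Hc (r - i + 1) * Hc (j - r)) := by
        intro r hr
        simp only [Finset.mem_Icc] at hr
        rw [bs1 i r hr.1 (by omega), one_smul,
          haval1 i r hi hr.1 (by omega),
          haval1 (r + 1) j (by omega) (by omega) hj,
          smul_mul_smul_comm, ← pow_add,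
          show r - i + (j - (r + 1)) = j - i - 1 from by omega,
          show j - (r + 1) + 1 = j - r from by omega]
      have hre : ∑ r ∈ Finset.Icc i (j - 1), Hc (r - i + 1) * Hc (j - r)
          = ∑ k ∈ Finset.Icc 1 (j - i), Hc k * Hc (j - i + 1 - k) := by
        apply Finset.sum_nbij' (i := fun r => r - i + 1) (j := fun k => k + i - 1) <;>
          simp only [Finset.mem_Icc] <;> intro r hr <;>
            first
              | omega
              | rw [show j - i + 1 - (r - i + 1) = j - r from by omega]
      rw [haval1 i j hi hij hj, map_smul, hHcl, smul_zero,
        Finset.sum_congr rfl hterm, ← Finset.smul_sum, hre,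
        key_cancel A hgcomm Hc hHmem (j - i), smul_zero]
    · have hj2 : j = t + 2 := by omega
      subst hj2
      rcases eq_or_lt_of_le hij with hi2 | hi2
      · subst hi2
        rw [ha3, hxd, Finset.Icc_eq_empty (by omega), Finset.sum_empty]
      · have h2i : 2 ≤ i := by
          have hne1 : i ≠ 1 := fun h => hne (by rw [h])
          omega
        have hit : i ≤ t + 1 := by omega
        have hterm : ∀ r ∈ Finset.Icc i (t + 2 - 1),
            (barSign rdeg i r • a i r) * a (r + 1) (t + 2)
              = ((-1 : ℝ) ^ (t + 1 - i)) • (Hc (r - i + 1) * xs (t + 1 - r)) := by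
          intro r hr
          simp only [Finset.mem_Icc] at hr
          have hr1 : r ≤ t + 1 := by omega
          rw [bs1 i r hr.1 hr1, one_smul, haval1 i r hi hr.1 hr1,
            haval2 r (by omega) hr1, smul_mul_smul_comm, ← pow_add,
            show r - i + (t + 1 - r) = t + 1 - i from by omega]
        have hre : ∑ r ∈ Finset.Icc i (t + 2 - 1), Hc (r - i + 1) * xs (t + 1 - r)
            = ∑ l ∈ Finset.Icc 1 (t + 2 - i), Hc l * xs (t + 2 - i - l) := by
          apply Finset.sum_nbij' (i := fun r => r - i + 1) (j := fun l => l + i - 1) <;>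
            simp only [Finset.mem_Icc] <;> intro r hr <;>
              first
                | omega
                | rw [show t + 2 - i - (r - i + 1) = t + 1 - r from by omega]
        rw [ha2 i h2i hit, map_smul, hdxs (t + 2 - i) (by omega) (by omega),
          Finset.sum_congr rfl hterm, ← Finset.smul_sum, hre,
          show t + 2 - i = (t + 1 - i) + 1 from by omega,
          pow_succ, mul_smul, neg_one_smul, neg_neg]
end

section
/- Let H = H_{2s+1} only (s ≥ 1) and let [x_p]_{2t+3} ∈ E_{2t+3}^{p,q} with t = ls−1 for some l ≥ 2, and let x_{p+2is}^{(l−1)} (1 ≤ i ≤ l−1) be forms as produced by the cup-product description of d_{2t+3}. Then the collection B = (a_{i,j}) defined by a_{i,j} = 0 for 1 ≤ i < j ≤ l, a_{i,i} = H_{2s+1} for 1 ≤ i ≤ l, a_{l+1,l+1} = x_p, and a_{i,l+1} = (−1)^{l+1−i} x_{p+2(l+1−i)s}^{(l−1)} for 2 ≤ i ≤ l, is a defining system for the (l+1)-fold Massey product ⟨H_{2s+1},...,H_{2s+1},x_p⟩ (with l copies of H_{2s+1}). -/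
/-!
Since `a_{i,r} = 0` for `i < r ≤ l`, the defining equation for `a_{i,j}` keeps only its term
`r = i`, which is `H ∧ a_{i+1,j}` (the bar sign of the odd form `H` is `+1`). Inside the `H`-block
this vanishes because `H` has odd degree, so `H ∧ H = 0`. In the last column it reads
`d a_{i,l+1} = H ∧ a_{i+1,l+1}`, and the alternating signs turn this into the recursion
`d x^{(l-1)}_m = -H ∧ x^{(l-1)}_{m-1}` of the cup-product description, with `x^{(l-1)}_0 = x_p`.
-/

section DefiningSystem

variable {W : Type} [Ring W] [Algebra ℝ W]

theorem mul_self_eq_zero_of_odd {A : ℤ → Submodule ℝ W}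
    (hgcomm : ∀ (i j : ℤ) (x y : W), x ∈ A i → y ∈ A j →
      x * y = ((-1 : ℝ) ^ (i * j)) • (y * x))
    {k : ℤ} (hk : Odd k) {y : W} (hy : y ∈ A k) : y * y = 0 := by
  have hanti : y * y = -(y * y) := by
    simpa [(hk.mul hk).neg_one_zpow] using hgcomm k k y y hy hy
  have htwo : (2 : ℝ) • (y * y) = 0 := by
    rw [two_smul]
    nth_rw 1 [hanti]
    exact neg_add_cancel _
  exact (smul_eq_zero.mp htwo).resolve_left two_ne_zero

theorem masseyDeg_self (rdeg : ℕ → ℤ) (i : ℕ) : masseyDeg rdeg i i = rdeg i := by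
  simp [masseyDeg]

theorem barSign_self_of_odd {rdeg : ℕ → ℤ} {i : ℕ} (h : Odd (rdeg i)) :
    barSign rdeg i i = 1 := by
  rw [barSign, masseyDeg_self]
  exact Even.neg_one_zpow (by rw [add_comm]; exact h.add_one)

theorem masseyDeg_succ_of_const {rdeg : ℕ → ℤ} {c : ℤ} {i l : ℕ} (hil : i ≤ l + 1)
    (hc : ∀ k, i ≤ k → k ≤ l → rdeg k = c) :
    masseyDeg rdeg i (l + 1) = ((l + 1 - i : ℕ) : ℤ) * (c - 1) + rdeg (l + 1) := by
  have hsum : ∑ k ∈ Finset.Icc i l, rdeg k = ((l + 1 - i : ℕ) : ℤ) * c := by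
    rw [Finset.sum_congr rfl fun k hk => hc k (Finset.mem_Icc.mp hk).1 (Finset.mem_Icc.mp hk).2,
      Finset.sum_const, Nat.card_Icc, nsmul_eq_mul]
  rw [masseyDeg, Finset.sum_Icc_succ_top hil, hsum, Nat.cast_sub hil]
  push_cast
  ring

def DefiningEq (d : W →ₗ[ℝ] W) (rdeg : ℕ → ℤ) (a : ℕ → ℕ → W) (i j : ℕ) : Prop :=
  d (a i j) = ∑ r ∈ Finset.Icc i (j - 1), (barSign rdeg i r • a i r) * a (r + 1) j

theorem definingEq_self_iff {d : W →ₗ[ℝ] W} {rdeg : ℕ → ℤ} {a : ℕ → ℕ → W} {i : ℕ}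
    (hi : 1 ≤ i) : DefiningEq d rdeg a i i ↔ d (a i i) = 0 := by
  rw [DefiningEq, Finset.Icc_eq_empty (by omega), Finset.sum_empty]

theorem definingEq_iff_of_row_eq_zero {d : W →ₗ[ℝ] W} {rdeg : ℕ → ℤ} {a : ℕ → ℕ → W}
    {i j : ℕ} (hij : i < j) (hrow : ∀ r, i < r → r < j → a i r = 0) :
    DefiningEq d rdeg a i j ↔ d (a i j) = (barSign rdeg i i • a i i) * a (i + 1) j := by
  rw [DefiningEq, Finset.sum_eq_single_of_mem i (Finset.mem_Icc.mpr ⟨le_rfl, by omega⟩)]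
  intro r hr hri
  rw [hrow r (lt_of_le_of_ne (Finset.mem_Icc.mp hr).1 (Ne.symm hri))
    (by have := (Finset.mem_Icc.mp hr).2; omega), smul_zero, zero_mul]

theorem definingEq_of_strictUpper_eq_zero {d : W →ₗ[ℝ] W} {rdeg : ℕ → ℤ} {a : ℕ → ℕ → W}
    {h : W} {i j : ℕ} (hij : i < j) (hsq : h * h = 0) (hdiag : ∀ k, i ≤ k → k ≤ j → a k k = h)
    (hzero : ∀ k k', i ≤ k → k < k' → k' ≤ j → a k k' = 0) : DefiningEq d rdeg a i j := by
  rw [definingEq_iff_of_row_eq_zero hij fun r hir hrj => hzero i r le_rfl hir hrj.le,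
    hzero i j le_rfl hij le_rfl, map_zero, hdiag i le_rfl hij.le, smul_mul_assoc]
  rcases (Nat.succ_le_of_lt hij).eq_or_lt with rfl | hlt
  · rw [hdiag (i + 1) (by omega) le_rfl, hsq, smul_zero]
  · rw [hzero (i + 1) j (by omega) hlt le_rfl, mul_zero, smul_zero]

theorem isDefiningSystem_of_offDiag {A : ℤ → Submodule ℝ W} {d : W →ₗ[ℝ] W} {m : ℕ}
    {rdeg : ℕ → ℤ} {z : ℕ → W} {a : ℕ → ℕ → W}
    (hz : ∀ i, 1 ≤ i → i ≤ m → z i ∈ A (rdeg i)) (hdz : ∀ i, 1 ≤ i → i ≤ m → d (z i) = 0)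
    (hdiag : ∀ i, 1 ≤ i → i ≤ m → a i i = z i)
    (hmem : ∀ i j, 1 ≤ i → i < j → j ≤ m → (i, j) ≠ (1, m) → a i j ∈ A (masseyDeg rdeg i j))
    (heq : ∀ i j, 1 ≤ i → i < j → j ≤ m → (i, j) ≠ (1, m) → DefiningEq d rdeg a i j) :
    IsDefiningSystem A d m rdeg z a := by
  refine ⟨fun i j hi hij hjm hne => ?_, hdiag, fun i j hi hij hjm hne => ?_⟩
  · rcases hij.eq_or_lt with rfl | hlt
    · rw [hdiag i hi hjm, masseyDeg_self]
      exact hz i hi hjm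
    · exact hmem i j hi hlt hjm hne
  · rcases hij.eq_or_lt with rfl | hlt
    · exact (definingEq_self_iff hi).mpr (by rw [hdiag i hi hjm, hdz i hi hjm])
    · exact heq i j hi hlt hjm hne

theorem map_neg_one_pow_smul_of_twisted_closed {d : W →ₗ[ℝ] W} {h : W} {w : ℕ → W} {m : ℕ}
    (hm : d (w (m + 1)) + h * w m = 0) :
    d ((-1 : ℝ) ^ (m + 1) • w (m + 1)) = h * ((-1 : ℝ) ^ m • w m) := by
  rw [map_smul, eq_neg_of_add_eq_zero_left hm, pow_succ, mul_neg_one, neg_smul, smul_neg,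
    mul_smul_comm, neg_neg]

end DefiningSystem

theorem defining_system_from_cup_product_description_single_twist_general {W : Type}
    [Ring W] [Algebra ℝ W]
    (A : ℤ → Submodule ℝ W)
    (d : W →ₗ[ℝ] W)
    (hgcomm : ∀ (i j : ℤ) (x y : W), x ∈ A i → y ∈ A j →
      x * y = ((-1 : ℝ) ^ (i * j)) • (y * x))
    (s : ℕ) (Hs : W)
    (hHsmem : Hs ∈ A (2 * (s : ℤ) + 1)) (hHscl : d Hs = 0)
    (l : ℕ) (p : ℤ)
    (x : W) (hxp : x ∈ A p) (hxd : d x = 0)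
    (w : ℕ → W) (hw0 : w 0 = x)
    (hwm : ∀ i : ℕ, 1 ≤ i → i ≤ l - 1 → w i ∈ A (p + 2 * i * s))
    (heq : ∀ m : ℕ, 1 ≤ m → m ≤ l - 1 → d (w m) + Hs * w (m - 1) = 0)
    (a : ℕ → ℕ → W)
    (ha0 : ∀ i j : ℕ, 1 ≤ i → i < j → j ≤ l → a i j = 0)
    (ha1 : ∀ i : ℕ, 1 ≤ i → i ≤ l → a i i = Hs)
    (ha2 : ∀ i : ℕ, 2 ≤ i → i ≤ l → a i (l + 1) = ((-1 : ℝ) ^ (l + 1 - i)) • w (l + 1 - i))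
    (ha3 : a (l + 1) (l + 1) = x) :
    IsDefiningSystem A d (l + 1) (fun i => if i ≤ l then 2 * (s : ℤ) + 1 else p)
      (fun i => if i ≤ l then Hs else x) a := by
  have hsq : Hs * Hs = 0 := mul_self_eq_zero_of_odd hgcomm (odd_two_mul_add_one _) hHsmem
  have hcol : ∀ i, 2 ≤ i → i ≤ l + 1 →
      a i (l + 1) = ((-1 : ℝ) ^ (l + 1 - i)) • w (l + 1 - i) := by
    intro i hi hil
    rcases hil.lt_or_eq with hil | rfl
    · exact ha2 i hi (by omega)
    · simp [ha3, hw0]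
  have hblock_or_last : ∀ i j, 1 ≤ i → i < j → j ≤ l + 1 → (i, j) ≠ (1, l + 1) →
      j ≤ l ∨ (j = l + 1 ∧ 2 ≤ i) := by
    intro i j hi _ hjl hne
    rcases hjl.lt_or_eq with hjl | rfl
    · exact Or.inl (Nat.le_of_lt_succ hjl)
    · exact Or.inr ⟨rfl, lt_of_le_of_ne hi fun h => hne (by rw [← h])⟩
  refine isDefiningSystem_of_offDiag (fun i _ _ => ?_) (fun i _ _ => ?_) (fun i hi hil => ?_)
    (fun i j hi hij hjl hne => ?_) (fun i j hi hij hjl hne => ?_)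
  · split_ifs <;> assumption
  · split_ifs <;> assumption
  · split_ifs with h
    · exact ha1 i hi h
    · rw [show i = l + 1 by omega, ha3]
  · rcases hblock_or_last i j hi hij hjl hne with hjl | ⟨rfl, hi2⟩
    · rw [ha0 i j hi hij hjl]
      exact zero_mem _
    · rw [hcol i hi2 hij.le, masseyDeg_succ_of_const hij.le fun k _ hk => if_pos hk,
        if_neg (by omega)]
      convert Submodule.smul_mem _ _ (hwm (l + 1 - i) (by omega) (by omega)) using 2
      ring
  · rcases hblock_or_last i j hi hij hjl hne with hjl | ⟨rfl, hi2⟩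
    · exact definingEq_of_strictUpper_eq_zero hij hsq (fun k hk hkj => ha1 k (by omega) (by omega))
        fun k k' hk hkk' hk'j => ha0 k k' (by omega) hkk' (by omega)
    · rw [definingEq_iff_of_row_eq_zero hij fun r hir hrj => ha0 i r hi hir (by omega),
        ha1 i hi (by omega), barSign_self_of_odd (by simp [show i ≤ l by omega]), one_smul,
        hcol i hi2 hij.le, hcol (i + 1) (by omega) (by omega),
        show l + 1 - i = l - i + 1 by omega, show l + 1 - (i + 1) = l - i by omega]
      exact map_neg_one_pow_smul_of_twisted_closed
        (by simpa using heq (l - i + 1) (by omega) (by omega))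

/-- Lemma 5.6(2) of the paper. Let `H = H_{2s+1}` only (`s ≥ 1`) and let
`x` be a closed `p`-form representing a class `[x_p]_{2t+3} ∈ E_{2t+3}^{p,q}` with
`t = l s - 1`, `l ≥ 2`, and let `w i = x_{p+2is}^{(l-1)}` (`1 ≤ i ≤ l-1`) be forms as
produced by the cup-product description of `d_{2t+3}` (the equations `heq`). Then the
collection `a` defined by `a_{i,j} = 0` (`1 ≤ i < j ≤ l`), `a_{i,i} = H_{2s+1}`
(`1 ≤ i ≤ l`), `a_{l+1,l+1} = x`, and `a_{i,l+1} = (-1)^{l+1-i} x_{p+2(l+1-i)s}^{(l-1)}`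
(`2 ≤ i ≤ l`) is a defining system for the `(l+1)`-fold Massey product
`⟨H_{2s+1}, …, H_{2s+1}, x_p⟩` (with `l` copies of `H_{2s+1}`). -/
theorem defining_system_from_cup_product_description_single_twist {W : Type}
    [Ring W] [Algebra ℝ W]
    (n : ℕ) (A : ℤ → Submodule ℝ W) [DirectSum.Decomposition A]
    (hbound : ∀ i : ℤ, i < 0 ∨ (n : ℤ) < i → A i = ⊥)
    (hmul : ∀ (i j : ℤ) (x y : W), x ∈ A i → y ∈ A j → x * y ∈ A (i + j))
    (d : W →ₗ[ℝ] W)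
    (hdmem : ∀ i : ℤ, ∀ x ∈ A i, d x ∈ A (i + 1))
    (hd2 : ∀ x : W, d (d x) = 0)
    (hleib : ∀ (i : ℤ) (x y : W), x ∈ A i →
      d (x * y) = d x * y + ((-1 : ℝ) ^ i) • (x * d y))
    (hgcomm : ∀ (i j : ℤ) (x y : W), x ∈ A i → y ∈ A j →
      x * y = ((-1 : ℝ) ^ (i * j)) • (y * x))
    (s : ℕ) (hs : 1 ≤ s) (Hs : W)
    (hHsmem : Hs ∈ A (2 * (s : ℤ) + 1)) (hHscl : d Hs = 0)
    (D : W →ₗ[ℝ] W) (hD : ∀ w : W, D w = d w + Hs * w)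
    (l : ℕ) (hl : 2 ≤ l) (t : ℕ) (htl : t + 1 = l * s) (p : ℤ)
    (x : W) (hxp : x ∈ A p) (hxd : d x = 0)
    (w : ℕ → W) (hw0 : w 0 = x)
    (hwm : ∀ i : ℕ, 1 ≤ i → i ≤ l - 1 → w i ∈ A (p + 2 * i * s))
    (heq : ∀ m : ℕ, 1 ≤ m → m ≤ l - 1 → d (w m) + Hs * w (m - 1) = 0)
    (a : ℕ → ℕ → W)
    (ha0 : ∀ i j : ℕ, 1 ≤ i → i < j → j ≤ l → a i j = 0)
    (ha1 : ∀ i : ℕ, 1 ≤ i → i ≤ l → a i i = Hs)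
    (ha2 : ∀ i : ℕ, 2 ≤ i → i ≤ l → a i (l + 1) = ((-1 : ℝ) ^ (l + 1 - i)) • w (l + 1 - i))
    (ha3 : a (l + 1) (l + 1) = x) :
    IsDefiningSystem A d (l + 1) (fun i => if i ≤ l then 2 * (s : ℤ) + 1 else p)
      (fun i => if i ≤ l then Hs else x) a :=
  defining_system_from_cup_product_description_single_twist_general A d hgcomm s Hs hHsmem hHscl l p
    x hxp hxd w hw0 hwm heq a ha0 ha1 ha2 ha3
end
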